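/- The function cov is the maximal packing bound function: for every packing bound function A and every bounded Borel subset C of ℝ^d, A(C) ≤ cov(C). -/

import Mathlib

/-!
Cover `C` by `n = cov C` unit balls and move the part of `C` lying in the `a`-th ball, by a
translation, into a unit ball around a point `w a`, where the `w a` are pairwise at least
`max (diam C + 2) 4` apart. The resulting map does not decrease distances, so by the Lipschitz
axiom `A C` is at most `A` of a union of `n` unit balls that are pairwise at distance at least `2`,
which is `n` by the union and sphere-bound axioms. In dimension `0` there is no room to spread
the balls out, but there `C` is at most a point.
-/

open scoped Pointwise
open MeasureTheory Bornology Filter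

/-- A packing bound function: an assignment of a nonnegative real number to every bounded
Borel subset of every Euclidean space, satisfying the sphere bound, Lipschitz, union,
and mesh axioms. -/
structure PackingBoundFunction where
  toFun : ∀ d : ℕ, Set (EuclideanSpace ℝ (Fin d)) → ℝ
  nonneg : ∀ (d : ℕ) (C : Set (EuclideanSpace ℝ (Fin d))),
    IsBounded C → MeasurableSet C → 0 ≤ toFun d C
  sphere_bound : ∀ (d : ℕ) (C : Set (EuclideanSpace ℝ (Fin d))),
    IsBounded C → MeasurableSet C → C.Nonempty →
    (∃ z, C ⊆ Metric.ball z 1) → toFun d C = 1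
  lipschitz : ∀ (d d' : ℕ) (C : Set (EuclideanSpace ℝ (Fin d)))
    (C' : Set (EuclideanSpace ℝ (Fin d'))),
    IsBounded C → MeasurableSet C → IsBounded C' → MeasurableSet C' →
    (∃ ψ : EuclideanSpace ℝ (Fin d) → EuclideanSpace ℝ (Fin d'),
      (∀ x ∈ C, ψ x ∈ C') ∧ ∀ x ∈ C, ∀ y ∈ C, dist x y ≤ dist (ψ x) (ψ y)) →
    toFun d C ≤ toFun d' C'
  union : ∀ (d : ℕ) (C C' : Set (EuclideanSpace ℝ (Fin d))),
    IsBounded C → MeasurableSet C → IsBounded C' → MeasurableSet C' →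
    (∀ x ∈ C, ∀ x' ∈ C', 2 ≤ dist x x') →
    toFun d (C ∪ C') = toFun d C + toFun d C'
  mesh : ∀ (ε : ℝ), 0 < ε → ∀ (d : ℕ) (C C' : Set (EuclideanSpace ℝ (Fin d))),
    IsBounded C → MeasurableSet C → IsBounded C' → MeasurableSet C' →
    C ⊆ Metric.thickening ε C' →
    toFun d ((1 / (1 + ε)) • C) ≤ toFun d C'

/-- `cov C` is the smallest number of open unit balls (centered anywhere) needed to cover `C`. -/
noncomputable def cov (d : ℕ) (C : Set (EuclideanSpace ℝ (Fin d))) : ℕ :=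
  sInf {m : ℕ | ∃ X : Finset (EuclideanSpace ℝ (Fin d)),
    X.card = m ∧ C ⊆ ⋃ x ∈ X, Metric.ball x 1}

open Metric

lemma sub_lt_dist_of_mem_ball {E : Type*} [PseudoMetricSpace E] {a b x y : E} {r s : ℝ}
    (hx : x ∈ ball a r) (hy : y ∈ ball b s) : dist a b - (r + s) < dist x y := by
  rw [mem_ball] at hx hy
  linarith [dist_triangle4 a x y b, dist_comm x a]

section Separated

variable {F : Type*} [NormedAddCommGroup F] [NormedSpace ℝ F] [Nontrivial F]

lemma exists_nat_pairwise_le_dist (M : ℝ) :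
    ∃ g : ℕ → F, Pairwise fun i j => M ≤ dist (g i) (g j) := by
  obtain ⟨v, hv⟩ := exists_norm_eq F zero_le_one
  refine ⟨fun k => ((k : ℝ) * M) • v, fun i j hij => ?_⟩
  have hij' : (1 : ℝ) ≤ |(i : ℝ) - j| := by
    exact_mod_cast Int.one_le_abs (sub_ne_zero.mpr (Int.natCast_inj.not.mpr hij))
  calc M ≤ |M| := le_abs_self M
    _ ≤ |(i : ℝ) - j| * |M| := le_mul_of_one_le_left (abs_nonneg M) hij'
    _ = dist (((i : ℝ) * M) • v) (((j : ℝ) * M) • v) := by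
      rw [dist_eq_norm, ← sub_smul, norm_smul, hv, ← sub_mul, Real.norm_eq_abs, abs_mul, mul_one]

lemma Set.Countable.exists_pairwise_le_dist {α : Type*} {s : Set α} (hs : s.Countable) (M : ℝ) :
    ∃ w : α → F, s.Pairwise fun a b => M ≤ dist (w a) (w b) := by
  obtain ⟨f, hf⟩ := Set.countable_iff_exists_injOn.mp hs
  obtain ⟨g, hg⟩ := exists_nat_pairwise_le_dist (F := F) M
  exact ⟨g ∘ f, fun a ha b hb hab => hg (hf.ne ha hb hab)⟩

end Separated

lemma exists_expanding_map_into_biUnion_ball {E : Type*} [NormedAddCommGroup E] {C : Set E}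
    {X : Finset E} (hCX : C ⊆ ⋃ a ∈ X, ball a 1) {D : ℝ} (hD : ∀ x ∈ C, ∀ y ∈ C, dist x y ≤ D)
    {w : E → E} (hw : (X : Set E).Pairwise fun a b => D + 2 ≤ dist (w a) (w b)) :
    ∃ ψ : E → E, (∀ x ∈ C, ψ x ∈ ⋃ a ∈ X, ball (w a) 1) ∧
      ∀ x ∈ C, ∀ y ∈ C, dist x y ≤ dist (ψ x) (ψ y) := by
  choose! c hcX hc using fun x (hx : x ∈ C) => Set.mem_iUnion₂.mp (hCX hx)
  have hψ : ∀ x ∈ C, x - c x + w (c x) ∈ ball (w (c x)) 1 := fun x hx => by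
    simpa [mem_ball, dist_eq_norm] using hc x hx
  refine ⟨fun x => x - c x + w (c x), fun x hx => Set.mem_iUnion₂.mpr ⟨c x, hcX x hx, hψ x hx⟩,
    fun x hx y hy => ?_⟩
  by_cases hxy : c x = c y
  · dsimp only
    rw [dist_eq_norm, dist_eq_norm, hxy, add_sub_add_right_eq_sub, sub_sub_sub_cancel_right]
  · linarith [hD x hx y hy, hw (hcX x hx) (hcX y hy) hxy,
      sub_lt_dist_of_mem_ball (hψ x hx) (hψ y hy)]

lemma exists_finset_subset_biUnion_ball {E : Type*} [PseudoMetricSpace E] [ProperSpace E]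
    {C : Set E} (hC : IsBounded C) : ∃ X : Finset E, C ⊆ ⋃ a ∈ X, ball a 1 := by
  obtain ⟨t, -, ht, hCt⟩ := finite_cover_balls_of_compact hC.isCompact_closure one_pos
  exact ⟨ht.toFinset, by simpa using subset_closure.trans hCt⟩

namespace PackingBoundFunction

variable (A : PackingBoundFunction) {d : ℕ}

lemma toFun_empty : A.toFun d ∅ = 0 := by
  have h := A.union d ∅ ∅ isBounded_empty MeasurableSet.empty isBounded_empty
    MeasurableSet.empty (by simp)
  rw [Set.union_self] at h
  linarith

lemma toFun_biUnion_ball_eq_card {ι : Type*} (w : ι → EuclideanSpace ℝ (Fin d)) (s : Finset ι)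
    (hw : (s : Set ι).Pairwise fun i j => 4 ≤ dist (w i) (w j)) :
    A.toFun d (⋃ i ∈ s, ball (w i) 1) = s.card := by
  classical
  induction s using Finset.induction_on with
  | empty => simp [toFun_empty]
  | insert a s ha ih =>
    rw [Finset.coe_insert, Set.pairwise_insert] at hw
    have hsep : ∀ x ∈ ball (w a) 1, ∀ y ∈ ⋃ i ∈ s, ball (w i) 1, 2 ≤ dist x y := by
      intro x hx y hy
      obtain ⟨i, hi, hyi⟩ := Set.mem_iUnion₂.mp hy
      linarith [sub_lt_dist_of_mem_ball hx hyi, (hw.2 i hi (ne_of_mem_of_not_mem hi ha).symm).1]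
    rw [Finset.set_biUnion_insert, A.union d _ _ isBounded_ball isOpen_ball.measurableSet
      (isBounded_biUnion_finset s |>.mpr fun _ _ => isBounded_ball)
      (isOpen_biUnion fun _ _ => isOpen_ball).measurableSet hsep,
      A.sphere_bound d _ isBounded_ball isOpen_ball.measurableSet
        ⟨w a, mem_ball_self one_pos⟩ ⟨w a, subset_rfl⟩, ih hw.1, Finset.card_insert_of_notMem ha]
    push_cast
    ring

lemma toFun_le_card_of_subset_biUnion_ball {C : Set (EuclideanSpace ℝ (Fin d))}
    (hCb : IsBounded C) (hCm : MeasurableSet C) {X : Finset (EuclideanSpace ℝ (Fin d))}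
    (hCX : C ⊆ ⋃ a ∈ X, ball a 1) : A.toFun d C ≤ X.card := by
  rcases C.eq_empty_or_nonempty with rfl | ⟨c, hc⟩
  · rw [toFun_empty]
    positivity
  have hX : 1 ≤ X.card := by
    obtain ⟨a, ha, -⟩ := Set.mem_iUnion₂.mp (hCX hc)
    exact Finset.card_pos.mpr ⟨a, ha⟩
  rcases Nat.eq_zero_or_pos d with rfl | hd
  · rw [A.sphere_bound 0 C hCb hCm ⟨c, hc⟩ ⟨c, fun x _ => by simp [Subsingleton.elim x c]⟩]
    exact_mod_cast hX
  have : NeZero d := ⟨hd.ne'⟩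
  obtain ⟨D, hD⟩ := isBounded_iff.mp hCb
  obtain ⟨w, hw⟩ := X.countable_toSet.exists_pairwise_le_dist
    (F := EuclideanSpace ℝ (Fin d)) (max (D + 2) 4)
  obtain ⟨ψ, hψC, hψ⟩ := exists_expanding_map_into_biUnion_ball hCX (fun x hx y hy => hD hx hy)
    (hw.mono' fun a b h => (le_max_left _ _).trans h)
  calc A.toFun d C ≤ A.toFun d (⋃ a ∈ X, ball (w a) 1) :=
        A.lipschitz d d _ _ hCb hCm (isBounded_biUnion_finset X |>.mpr fun _ _ => isBounded_ball)
          (isOpen_biUnion fun _ _ => isOpen_ball).measurableSet ⟨ψ, hψC, hψ⟩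
    _ = X.card :=
      A.toFun_biUnion_ball_eq_card w X (hw.mono' fun a b h => (le_max_right _ _).trans h)

end PackingBoundFunction

/-- `cov` is the maximal packing bound function: every packing bound
function is dominated by `cov` on bounded Borel sets. -/
theorem packingBoundFunction_le_cov (A : PackingBoundFunction) (d : ℕ)
    (C : Set (EuclideanSpace ℝ (Fin d))) (hCb : IsBounded C) (hCm : MeasurableSet C) :
    A.toFun d C ≤ (cov d C : ℝ) := by
  obtain ⟨X₀, hX₀⟩ := exists_finset_subset_biUnion_ball hCb
  obtain ⟨X, hXcard, hCX⟩ : ∃ X : Finset (EuclideanSpace ℝ (Fin d)),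
      X.card = cov d C ∧ C ⊆ ⋃ x ∈ X, ball x 1 :=
    Nat.sInf_mem (s := {m | ∃ X : Finset _, X.card = m ∧ C ⊆ ⋃ x ∈ X, ball x 1})
      ⟨X₀.card, X₀, rfl, hX₀⟩
  rw [← hXcard]
  exact A.toFun_le_card_of_subset_biUnion_ball hCb hCm hCX
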